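/- arXiv:1510.03364 — 7 statements merged into one kernel-verified Lean document; each statement's English description precedes it below -/
import Mathlib

section
/- (Abstract Kreĭn resolvent formula.) Let H and E be complex vector spaces, D ⊆ H a linear subspace, T : D → H, Γ0 : D → E, Γ1 : D → E linear maps, z ∈ ℂ, and let B, M : E → E be linear maps with B − M bijective. Suppose: (i) R∞ : H → H is linear with R∞f ∈ D, T(R∞f) − z·R∞f = f and Γ0(R∞f) = 0 for every f ∈ H; (ii) γ : E → H is linear with γh ∈ D, T(γh) = z·γh and Γ0(γh) = h for every h ∈ E; (iii) Γ1u = M(Γ0u) for every u ∈ D with Tu = zu; (iv) Γ0 is injective on {u ∈ D : Tu = zu}; (v) R_B : H → H is linear with R_Bf ∈ D, T(R_Bf) − z·R_Bf = f and Γ1(R_Bf) = B(Γ0(R_Bf)) for every f ∈ H. Then R_B = R∞ + γ ∘ (B−M)^{−1} ∘ Γ1 ∘ R∞. -/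
/-- **Abstract Kreĭn resolvent formula** (Proposition 3.2 of the paper).
`H`, `E` are complex vector spaces, `D ⊆ H` a subspace, `T : D → H` the "maximal operator",
`Γ0, Γ1 : D → E` the boundary maps, `M` the Weyl–Titchmarsh function at the point `z`,
`Rinf` the resolvent of the extension with `Γ0 u = 0`, `γ` the solution operator, and
`RB` the (generalised) resolvent of the extension determined by `Γ1 u = B (Γ0 u)`.
Then `RB = Rinf + γ ∘ (B − M)⁻¹ ∘ Γ1 ∘ Rinf`. -/
theorem krein_resolvent_formula
    (H E : Type*) [AddCommGroup H] [Module ℂ H] [AddCommGroup E] [Module ℂ E]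
    (D : Submodule ℂ H) (T : D →ₗ[ℂ] H) (Γ0 Γ1 : D →ₗ[ℂ] E) (z : ℂ)
    (B M : E →ₗ[ℂ] E) (hBM : Function.Bijective (B - M))
    (Rinf : H →ₗ[ℂ] D)
    (hRinf : ∀ f : H, T (Rinf f) - z • ((Rinf f : D) : H) = f ∧ Γ0 (Rinf f) = 0)
    (γ : E →ₗ[ℂ] D)
    (hγ : ∀ h : E, T (γ h) = z • ((γ h : D) : H) ∧ Γ0 (γ h) = h)
    (hM : ∀ u : D, T u = z • (u : H) → Γ1 u = M (Γ0 u))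
    (hinj : ∀ u v : D, T u = z • (u : H) → T v = z • (v : H) → Γ0 u = Γ0 v → u = v)
    (RB : H →ₗ[ℂ] D)
    (hRB : ∀ f : H, T (RB f) - z • ((RB f : D) : H) = f ∧ Γ1 (RB f) = B (Γ0 (RB f))) :
    ∀ f : H,
      RB f = Rinf f + γ ((LinearEquiv.ofBijective (B - M) hBM).symm (Γ1 (Rinf f))) := by
  intro f
  set w : D := RB f - Rinf f with hw
  have hTw : T w = z • (w : H) := by
    have h1 := (hRB f).1
    have h2 := (hRinf f).1
    simp only [hw, map_sub, Submodule.coe_sub, smul_sub]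
    have : T (RB f) - z • ((RB f : D) : H) = T (Rinf f) - z • ((Rinf f : D) : H) := by
      rw [h1, h2]
    linear_combination (norm := module) this
  have hΓ0w : Γ0 w = Γ0 (RB f) := by
    simp [hw, map_sub, (hRinf f).2]
  -- compute Γ0 (RB f)
  have key : (B - M) (Γ0 (RB f)) = Γ1 (Rinf f) := by
    have h1 : Γ1 w = M (Γ0 (RB f)) := by rw [hM w hTw, hΓ0w]
    have h2 : Γ1 w = Γ1 (RB f) - Γ1 (Rinf f) := by simp [hw]
    have h3 := (hRB f).2
    simp only [LinearMap.sub_apply]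
    rw [← h3]
    have := h2.symm.trans h1
    linear_combination (norm := abel) this
  set h : E := (LinearEquiv.ofBijective (B - M) hBM).symm (Γ1 (Rinf f)) with hh
  have hΓ0h : Γ0 (RB f) = h := by
    apply (LinearEquiv.ofBijective (B - M) hBM).injective
    simpa [hh, LinearEquiv.ofBijective_apply] using key
  have : w = γ h := by
    apply hinj w (γ h) hTw (hγ h).1
    rw [hΓ0w, (hγ h).2, hΓ0h]
  have := this
  rw [hw] at this
  linear_combination (norm := abel) this
end

section
/- Let l1,l2,l3>0 with l1+l2+l3=1, let ľ1,ľ2>0 with ľ1+ľ2=l2, let τ∈ℝ and set τ̌:=τ/l2. Let k∈ℂ with sin(kľ1)≠0 and sin(kľ2)≠0. Define the 2×2 matrices M̌ := k·[[−cot(kľ1)−cot(kľ2), e^{iτ̌ľ1}/sin(kľ1)+e^{−iτ̌ľ2}/sin(kľ2)], [e^{−iτ̌ľ1}/sin(kľ1)+e^{iτ̌ľ2}/sin(kľ2), −cot(kľ1)−cot(kľ2)]] and B̌ := diag(−(l1+l3)k², 0). Then det(M̌ − B̌) = −k²·(2cos τ + k(l1+l3)sin(kl2) − 2cos(kl2))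 / (sin(kľ1)·sin(kľ2)). In particular, if k ≠ 0 then det(M̌ − B̌) = 0 if and only if 2cos τ + k(l1+l3)sin(kl2) − 2cos(kl2) = 0. -/
/-!
Write `D = ccot x₁ + ccot x₂ = sin (x₁ + x₂) / (sin x₁ sin x₂)`. The determinant is
`k² (D² - P) - L k³ D`, where `P` is the product of the off-diagonal entries. In `P` the phases
`e^{± i θⱼ}` cancel on each edge, leaving `1 / sin² x₁ + 1 / sin² x₂` plus the cross term
`2 cos (θ₁ + θ₂) / (sin x₁ sin x₂)`. By `sin² + cos² = 1`, `D²` has the same two squares, which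
cancel in `D² - P`, and the cross term `2 cos (x₁ + x₂) / (sin x₁ sin x₂)`. With `θ₁ + θ₂ = τ` and `x₁ + x₂ = k l₂` this is
the dispersion relation.
-/

noncomputable section

/-- Complex cotangent. -/
def ccot (z : ℂ) : ℂ := Complex.cos z / Complex.sin z

open Complex

theorem ccot_add_ccot {x y : ℂ} (hx : sin x ≠ 0) (hy : sin y ≠ 0) :
    ccot x + ccot y = sin (x + y) / (sin x * sin y) := by
  rw [ccot, ccot, sin_add]
  field_simp
  ring

theorem sq_ccot_add_ccot {x y : ℂ} (hx : sin x ≠ 0) (hy : sin y ≠ 0) :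
    (ccot x + ccot y) ^ 2 = 1 / sin x ^ 2 + 1 / sin y ^ 2 + 2 * cos (x + y) / (sin x * sin y) := by
  rw [ccot_add_ccot hx hy, sin_add, cos_add]
  field_simp
  linear_combination sin y ^ 2 * sin_sq_add_cos_sq x + sin x ^ 2 * sin_sq_add_cos_sq y

theorem exp_div_add_exp_div_mul (θ₁ θ₂ s₁ s₂ : ℂ) :
    (exp (I * θ₁) / s₁ + exp (-(I * θ₂)) / s₂) * (exp (-(I * θ₁)) / s₁ + exp (I * θ₂) / s₂)
      = 1 / s₁ ^ 2 + 1 / s₂ ^ 2 + 2 * cos (θ₁ + θ₂) / (s₁ * s₂) := by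
  rw [exp_neg, exp_neg]
  have h₁ := mul_inv_cancel₀ (exp_ne_zero (I * θ₁))
  have h₂ := mul_inv_cancel₀ (exp_ne_zero (I * θ₂))
  have hcos : 2 * cos (θ₁ + θ₂)
      = exp (I * θ₁) * exp (I * θ₂) + (exp (I * θ₁))⁻¹ * (exp (I * θ₂))⁻¹ := by
    rw [two_cos, ← mul_inv, ← exp_add, ← exp_neg]
    ring_nf
  linear_combination -(s₁⁻¹ * s₂⁻¹) * hcos + s₁⁻¹ ^ 2 * h₁ + s₂⁻¹ ^ 2 * h₂

theorem det_cycle_matrix_sub {x₁ x₂ : ℂ} (θ₁ θ₂ k L : ℂ) (h₁ : sin x₁ ≠ 0) (h₂ : sin x₂ ≠ 0) :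
    (k • !![-ccot x₁ - ccot x₂,
        exp (I * θ₁) / sin x₁ + exp (-(I * θ₂)) / sin x₂;
        exp (-(I * θ₁)) / sin x₁ + exp (I * θ₂) / sin x₂,
        -ccot x₁ - ccot x₂] - !![-L * k ^ 2, 0; 0, 0]).det
      = -k ^ 2 * (2 * cos (θ₁ + θ₂) + k * L * sin (x₁ + x₂) - 2 * cos (x₁ + x₂))
          / (sin x₁ * sin x₂) := by
  have hdiag := ccot_add_ccot h₁ h₂
  have hsq := sq_ccot_add_ccot h₁ h₂
  have hoff := exp_div_add_exp_div_mul θ₁ θ₂ (sin x₁) (sin x₂)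
  rw [Matrix.det_fin_two]
  simp only [Matrix.sub_apply, Matrix.smul_apply, Matrix.of_apply, Matrix.cons_val',
    Matrix.cons_val_zero, Matrix.cons_val_one, Matrix.empty_val', Matrix.cons_val_fin_one,
    smul_eq_mul]
  linear_combination k ^ 2 * hsq - k ^ 2 * hoff - L * k ^ 3 * hdiag

theorem model_determinant_general (l1 l2 l3 : ℝ) (hl2 : 0 < l2) (lc1 lc2 : ℝ)
    (hlc : lc1 + lc2 = l2) (τ : ℝ) (τc : ℝ) (hτc : τc = τ / l2)
    (k : ℂ) (h1 : Complex.sin (k * lc1) ≠ 0) (h2 : Complex.sin (k * lc2) ≠ 0)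
    (Mc Bc : Matrix (Fin 2) (Fin 2) ℂ)
    (hM : Mc = k • !![-ccot (k * lc1) - ccot (k * lc2),
        Complex.exp (Complex.I * (τc * lc1)) / Complex.sin (k * lc1)
          + Complex.exp (-(Complex.I * (τc * lc2))) / Complex.sin (k * lc2);
        Complex.exp (-(Complex.I * (τc * lc1))) / Complex.sin (k * lc1)
          + Complex.exp (Complex.I * (τc * lc2)) / Complex.sin (k * lc2),
        -ccot (k * lc1) - ccot (k * lc2)])
    (hB : Bc = !![-(((l1 + l3 : ℝ) : ℂ)) * k ^ 2, 0; 0, 0]) :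
    (Mc - Bc).det =
      -k ^ 2 * (2 * Complex.cos (τ : ℂ) + k * ((l1 + l3 : ℝ) : ℂ) * Complex.sin (k * l2)
          - 2 * Complex.cos (k * l2)) / (Complex.sin (k * lc1) * Complex.sin (k * lc2)) ∧
    (k ≠ 0 → ((Mc - Bc).det = 0 ↔
      2 * Complex.cos (τ : ℂ) + k * ((l1 + l3 : ℝ) : ℂ) * Complex.sin (k * l2)
        - 2 * Complex.cos (k * l2) = 0)) := by
  have hphase : (τc : ℂ) * lc1 + τc * lc2 = τ := by
    rw [← mul_add]
    exact_mod_cast (show τc * (lc1 + lc2) = τ by rw [hτc, hlc]; field_simp)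
  have hlength : k * lc1 + k * lc2 = k * l2 := by
    rw [← mul_add]
    exact_mod_cast congrArg (k * ·) (congrArg ((↑) : ℝ → ℂ) hlc)
  rw [hM, hB, det_cycle_matrix_sub _ _ _ _ h1 h2, hphase, hlength]
  exact ⟨rfl, fun hk => by simp [hk, h1, h2]⟩

/-- Section 2.6 of the paper: the singularities of the generalised resolvent of the
`z`-dependent model operator `Ǎ^{(τ̌)}(z)` on a two-edge cycle of lengths `ľ1, ľ2`
(with the energy-dependent condition at one vertex encoded by `B̌(z)`) are exactly the
solutions of the limiting dispersion relation
`2 cos τ + k(l1+l3) sin(k l2) − 2 cos(k l2) = 0`. -/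
theorem model_determinant (l1 l2 l3 : ℝ) (hl1 : 0 < l1) (hl2 : 0 < l2) (hl3 : 0 < l3)
    (hsum : l1 + l2 + l3 = 1) (lc1 lc2 : ℝ) (hlc1 : 0 < lc1) (hlc2 : 0 < lc2)
    (hlc : lc1 + lc2 = l2) (τ : ℝ) (τc : ℝ) (hτc : τc = τ / l2)
    (k : ℂ) (h1 : Complex.sin (k * lc1) ≠ 0) (h2 : Complex.sin (k * lc2) ≠ 0)
    (Mc Bc : Matrix (Fin 2) (Fin 2) ℂ)
    (hM : Mc = k • !![-ccot (k * lc1) - ccot (k * lc2),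
        Complex.exp (Complex.I * (τc * lc1)) / Complex.sin (k * lc1)
          + Complex.exp (-(Complex.I * (τc * lc2))) / Complex.sin (k * lc2);
        Complex.exp (-(Complex.I * (τc * lc1))) / Complex.sin (k * lc1)
          + Complex.exp (Complex.I * (τc * lc2)) / Complex.sin (k * lc2),
        -ccot (k * lc1) - ccot (k * lc2)])
    (hB : Bc = !![-(((l1 + l3 : ℝ) : ℂ)) * k ^ 2, 0; 0, 0]) :
    (Mc - Bc).det =
      -k ^ 2 * (2 * Complex.cos (τ : ℂ) + k * ((l1 + l3 : ℝ) : ℂ) * Complex.sin (k * l2)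
          - 2 * Complex.cos (k * l2)) / (Complex.sin (k * lc1) * Complex.sin (k * lc2)) ∧
    (k ≠ 0 → ((Mc - Bc).det = 0 ↔
      2 * Complex.cos (τ : ℂ) + k * ((l1 + l3 : ℝ) : ℂ) * Complex.sin (k * l2)
        - 2 * Complex.cos (k * l2) = 0)) :=
  model_determinant_general l1 l2 l3 hl2 lc1 lc2 hlc τ τc hτc k h1 h2 Mc Bc hM hB
end
end

section
/- Let l1,l2,l3>0 with l1+l2+l3=1, τ∈ℝ, and k∈ℂ with sin(kl2)≠0. Define u(x) := e^{−iτx}·(sin(k(l2−x)) + e^{iτ}·sin(kx))/sin(kl2) on [0,l2]. Then: (i) −(u''+2iτu'−τ²u) = k²u on (0,l2); (ii) u(0) = 1 and e^{−i(l1+l3)τ}·u(l2) = 1; and (iii) the condition (u'+iτu)(0) − e^{−i(l1+l3)τ}·(u'+iτu)(l2) = −k²(l1+l3)·u(0) holds if and only if 2cot(kl2) − 2cos(τ)/sin(kl2) = k(l1+l3). -/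
/-!
Write `u = e^{-iτx} v`. The gauge factor turns `((1/i) d/dx + τ)²` into `-d²/dx²` and
`∂^(τ)u = u' + iτu` into `e^{-iτx} v'`, so `v` is the solution of `v'' = -k² v` with
`v(0) = 1`, `v(l2) = e^{iτ}`. Since `e^{-i(l1+l3)τ} e^{-iτ l2} = e^{-iτ}`, the boundary
condition becomes `v'(0) - e^{-iτ} v'(l2) = k (e^{iτ} + e^{-iτ} - 2 cos k l2) / sin k l2
= 2k (cos τ - cos k l2) / sin k l2 = -k² (l1 + l3)`; divide by `-k`.
-/

noncomputable section

open Complex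

section Gauge

variable (c : ℂ) {v v' v'' : ℝ → ℂ}

lemma hasDerivAt_exp_neg_mul_mul {x : ℝ} {d : ℂ} (hv : HasDerivAt v d x) :
    HasDerivAt (fun y : ℝ => exp (-(c * y)) * v y) (exp (-(c * x)) * (d - c * v x)) x := by
  have hexp : HasDerivAt (fun y : ℝ => exp (-(c * y))) (exp (-(c * x)) * -c) x := by
    simpa using (((hasDerivAt_id (x : ℂ)).const_mul c).neg.cexp).comp_ofReal
  exact (hexp.mul hv).congr_deriv (by ring)

lemma deriv_exp_neg_mul_mul (hv : ∀ x, HasDerivAt v (v' x) x) :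
    deriv (fun y : ℝ => exp (-(c * y)) * v y) =
      fun y : ℝ => exp (-(c * y)) * (v' y - c * v y) :=
  funext fun x => (hasDerivAt_exp_neg_mul_mul c (hv x)).deriv

lemma deriv_deriv_exp_neg_mul_mul (hv : ∀ x, HasDerivAt v (v' x) x)
    (hv' : ∀ x, HasDerivAt v' (v'' x) x) :
    deriv (deriv fun y : ℝ => exp (-(c * y)) * v y) =
      fun y : ℝ => exp (-(c * y)) * (v'' y - 2 * c * v' y + c ^ 2 * v y) := by
  rw [deriv_exp_neg_mul_mul c hv,
    deriv_exp_neg_mul_mul c (v := fun y => v' y - c * v y) fun x =>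
      (hv' x).sub ((hv x).const_mul c)]
  funext y
  ring

lemma deriv_exp_neg_mul_mul_add_mul (hv : ∀ x, HasDerivAt v (v' x) x) (x : ℝ) :
    deriv (fun y : ℝ => exp (-(c * y)) * v y) x + c * (exp (-(c * x)) * v x) =
      exp (-(c * x)) * v' x := by
  rw [deriv_exp_neg_mul_mul c hv]
  ring

end Gauge

section SinInterpolant

variable (k : ℂ) (l : ℝ) (a b : ℂ)

def sinInterpolant (x : ℝ) : ℂ :=
  (a * sin (k * (l - x)) + b * sin (k * x)) / sin (k * l)

def sinInterpolantDeriv (x : ℝ) : ℂ :=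
  k * (b * cos (k * x) - a * cos (k * (l - x))) / sin (k * l)

lemma hasDerivAt_sinInterpolant (x : ℝ) :
    HasDerivAt (sinInterpolant k l a b) (sinInterpolantDeriv k l a b x) x := by
  have hin : HasDerivAt (fun z : ℂ => k * (l - z)) (-k) x := by
    simpa using ((hasDerivAt_id (x : ℂ)).const_sub (l : ℂ)).const_mul k
  have hlin : HasDerivAt (fun z : ℂ => k * z) k x := by
    simpa using (hasDerivAt_id (x : ℂ)).const_mul k
  exact ((((hin.csin.const_mul a).add (hlin.csin.const_mul b)).div_const
    (sin (k * l))).comp_ofReal).congr_deriv (by simp only [sinInterpolantDeriv]; ring)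

lemma hasDerivAt_sinInterpolantDeriv (x : ℝ) :
    HasDerivAt (sinInterpolantDeriv k l a b) (-k ^ 2 * sinInterpolant k l a b x) x := by
  have hin : HasDerivAt (fun z : ℂ => k * (l - z)) (-k) x := by
    simpa using ((hasDerivAt_id (x : ℂ)).const_sub (l : ℂ)).const_mul k
  have hlin : HasDerivAt (fun z : ℂ => k * z) k x := by
    simpa using (hasDerivAt_id (x : ℂ)).const_mul k
  exact ((((hlin.ccos.const_mul b).sub (hin.ccos.const_mul a)).const_mul k).div_const
    (sin (k * l))).comp_ofReal.congr_deriv (by simp only [sinInterpolant]; ring)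

variable {k l}

lemma sinInterpolant_zero (hs : sin (k * l) ≠ 0) : sinInterpolant k l a b 0 = a := by
  simp [sinInterpolant, hs]

lemma sinInterpolant_self (hs : sin (k * l) ≠ 0) : sinInterpolant k l a b l = b := by
  simp [sinInterpolant, hs]

lemma sinInterpolantDeriv_zero :
    sinInterpolantDeriv k l a b 0 = k * (b - a * cos (k * l)) / sin (k * l) := by
  simp [sinInterpolantDeriv]

lemma sinInterpolantDeriv_self :
    sinInterpolantDeriv k l a b l = k * (b * cos (k * l) - a) / sin (k * l) := by
  simp [sinInterpolantDeriv]

lemma sinInterpolantDeriv_zero_sub_exp_mul_self (θ : ℂ) :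
    sinInterpolantDeriv k l 1 (exp (I * θ)) 0 -
        exp (-(I * θ)) * sinInterpolantDeriv k l 1 (exp (I * θ)) l =
      2 * k * (cos θ - cos (k * l)) / sin (k * l) := by
  have hinv : exp (-(I * θ)) * exp (I * θ) = 1 := by
    rw [← exp_add, neg_add_cancel, exp_zero]
  have hcos : exp (I * θ) + exp (-(I * θ)) = 2 * cos θ := by
    rw [two_cos, mul_comm I, neg_mul]
  rw [sinInterpolantDeriv_zero, sinInterpolantDeriv_self]
  linear_combination k / sin (k * l) * hcos - k * cos (k * l) / sin (k * l) * hinv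

end SinInterpolant

theorem bloch_eigenfunction_delta_general (l1 l2 l3 : ℝ) (hsum : l1 + l2 + l3 = 1) (τ : ℝ) (k : ℂ)
    (hs : Complex.sin (k * l2) ≠ 0) (u : ℝ → ℂ)
    (hu : u = fun x : ℝ => Complex.exp (-(Complex.I * (τ : ℂ) * (x : ℂ))) *
      ((Complex.sin (k * ((l2 : ℂ) - (x : ℂ))) +
        Complex.exp (Complex.I * (τ : ℂ)) * Complex.sin (k * (x : ℂ))) /
        Complex.sin (k * l2))) :
    (∀ x ∈ Set.Ioo (0 : ℝ) l2,
      -(deriv (deriv u) x + 2 * Complex.I * (τ : ℂ) * deriv u x - (τ : ℂ) ^ 2 * u x)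
        = k ^ 2 * u x) ∧
    u 0 = 1 ∧
    Complex.exp (-(Complex.I * (((l1 + l3) * τ : ℝ) : ℂ))) * u l2 = 1 ∧
    (((deriv u 0 + Complex.I * (τ : ℂ) * u 0) -
        Complex.exp (-(Complex.I * (((l1 + l3) * τ : ℝ) : ℂ))) *
          (deriv u l2 + Complex.I * (τ : ℂ) * u l2)
        = -(k ^ 2 * ((l1 + l3 : ℝ) : ℂ) * u 0)) ↔
      (2 * Complex.cos (k * l2) / Complex.sin (k * l2)
          - 2 * Complex.cos (τ : ℂ) / Complex.sin (k * l2)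
        = k * ((l1 + l3 : ℝ) : ℂ))) := by
  have hk : k ≠ 0 := by
    rintro rfl
    simp at hs
  have hL : (l1 : ℂ) + l3 = 1 - l2 := by exact_mod_cast (by linarith : l1 + l3 = 1 - l2)
  have hweight :
      exp (-(I * (((l1 + l3) * τ : ℝ) : ℂ))) * exp (-(I * τ * l2)) = exp (-(I * τ)) := by
    rw [← exp_add]
    congr 1
    push_cast
    linear_combination (-(I * τ)) * hL
  set w := exp (I * τ)
  have hv := hasDerivAt_sinInterpolant k l2 1 w
  have hv' := hasDerivAt_sinInterpolantDeriv k l2 1 w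
  replace hu : u = fun x : ℝ => exp (-(I * τ * x)) * sinInterpolant k l2 1 w x := by
    simp only [hu, sinInterpolant, one_mul]
  subst hu
  refine ⟨fun x _ => ?_, ?_, ?_, ?_⟩ <;> beta_reduce
  · rw [deriv_deriv_exp_neg_mul_mul _ hv hv', deriv_exp_neg_mul_mul _ hv]
    linear_combination τ ^ 2 * exp (-(I * τ * x)) * sinInterpolant k l2 1 w x * I_sq
  · simp [sinInterpolant_zero _ _ hs]
  · rw [sinInterpolant_self _ _ hs, ← mul_assoc, hweight, ← exp_add, neg_add_cancel, exp_zero]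
  · rw [deriv_exp_neg_mul_mul_add_mul _ hv, deriv_exp_neg_mul_mul_add_mul _ hv, ← mul_assoc,
      hweight]
    simp only [ofReal_zero, mul_zero, neg_zero, exp_zero, one_mul]
    rw [sinInterpolantDeriv_zero_sub_exp_mul_self, sinInterpolant_zero _ _ hs, mul_one]
    exact (Eq.congr (by ring) (by ring)).trans (mul_right_inj' (neg_ne_zero.2 hk))

/-- Section 6.1 of the paper: the Bloch eigenfunctions of the homogenised operator
`A_hom^{(τ)}`.  With `w_soft = e^{−i(l1+l3)τ}`, the explicit function
`u(x) = e^{−iτx}(sin k(l2−x) + e^{iτ} sin kx)/sin(k l2)` solves the spectral equation,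
takes value `1` at both (weighted) endpoints, and satisfies the `δ`-type boundary
condition iff the dispersion relation `2 cot(k l2) − 2 cos τ / sin(k l2) = k(l1+l3)` holds. -/
theorem bloch_eigenfunction_delta (l1 l2 l3 : ℝ) (hl1 : 0 < l1) (hl2 : 0 < l2)
    (hl3 : 0 < l3) (hsum : l1 + l2 + l3 = 1) (τ : ℝ) (k : ℂ)
    (hs : Complex.sin (k * l2) ≠ 0) (u : ℝ → ℂ)
    (hu : u = fun x : ℝ => Complex.exp (-(Complex.I * (τ : ℂ) * (x : ℂ))) *
      ((Complex.sin (k * ((l2 : ℂ) - (x : ℂ))) +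
        Complex.exp (Complex.I * (τ : ℂ)) * Complex.sin (k * (x : ℂ))) /
        Complex.sin (k * l2))) :
    (∀ x ∈ Set.Ioo (0 : ℝ) l2,
      -(deriv (deriv u) x + 2 * Complex.I * (τ : ℂ) * deriv u x - (τ : ℂ) ^ 2 * u x)
        = k ^ 2 * u x) ∧
    u 0 = 1 ∧
    Complex.exp (-(Complex.I * (((l1 + l3) * τ : ℝ) : ℂ))) * u l2 = 1 ∧
    (((deriv u 0 + Complex.I * (τ : ℂ) * u 0) -
        Complex.exp (-(Complex.I * (((l1 + l3) * τ : ℝ) : ℂ))) *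
          (deriv u l2 + Complex.I * (τ : ℂ) * u l2)
        = -(k ^ 2 * ((l1 + l3 : ℝ) : ℂ) * u 0)) ↔
      (2 * Complex.cos (k * l2) / Complex.sin (k * l2)
          - 2 * Complex.cos (τ : ℂ) / Complex.sin (k * l2)
        = k * ((l1 + l3 : ℝ) : ℂ))) :=
  bloch_eigenfunction_delta_general l1 l2 l3 hsum τ k hs u hu
end
end

section
/- Let l1,l2,l3>0 with l1+l2+l3=1, τ∈ℝ, and k>0 real with sin(kl2)≠0, and suppose 2cot(kl2) − 2cos(τ)/sin(kl2) = k(l1+l3). Define u(x) := e^{−iτx}·(sin(k(l2−x)) + e^{iτ}·sin(kx))/sin(kl2). Then ∫₀^{l2} |u(x)|² dx + (l1+l3) = (l1+l3)/2 + l2·(1 − cos(τ)·cos(kl2))/sin²(kl2). -/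
open MeasureTheory Real

/-! The phase `e^{-iτx}` has modulus one, so `‖u x‖² sin²(k l₂)` is the real trigonometric
polynomial `sin²(k(l₂ - x)) + sin²(kx) + 2 cos τ sin(k(l₂ - x)) sin(kx)`, whose integral over
`[0, l₂]` is `l₂ (1 - cos τ cos kl₂) + (cos τ - cos kl₂) sin(kl₂) / k`. After division by
`sin²(kl₂)` the dispersion relation turns the second summand into `-(l₁ + l₃) / 2`. -/

theorem sq_norm_ofReal_add_exp_mul_ofReal (p q τ : ℝ) :
    ‖(p : ℂ) + Complex.exp (Complex.I * τ) * q‖ ^ 2 = p ^ 2 + q ^ 2 + 2 * cos τ * p * q := by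
  have hpolar : (p : ℂ) + Complex.exp (Complex.I * τ) * q
      = ↑(p + q * cos τ) + ↑(q * sin τ) * Complex.I := by
    rw [mul_comm Complex.I, Complex.exp_mul_I]
    push_cast
    ring
  rw [hpolar, Complex.sq_norm, Complex.normSq_add_mul_I]
  linear_combination q ^ 2 * sin_sq_add_cos_sq τ

theorem integral_sin_mul_sq {k : ℝ} (hk : k ≠ 0) (a : ℝ) :
    ∫ x in (0 : ℝ)..a, sin (k * x) ^ 2 = (a - sin (k * a) * cos (k * a) / k) / 2 := by
  rw [intervalIntegral.integral_comp_mul_left (fun x => sin x ^ 2) hk, integral_sin_sq]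
  simp only [mul_zero, sin_zero, cos_zero, mul_one, zero_sub, sub_zero, smul_eq_mul]
  field_simp
  ring

theorem integral_sin_mul_sub_sq {k : ℝ} (hk : k ≠ 0) (a : ℝ) :
    ∫ x in (0 : ℝ)..a, sin (k * (a - x)) ^ 2 = (a - sin (k * a) * cos (k * a) / k) / 2 := by
  rw [intervalIntegral.integral_comp_sub_left (fun x => sin (k * x) ^ 2) a]
  simpa using integral_sin_mul_sq hk a

theorem integral_sin_mul_sub_mul_sin_mul {k : ℝ} (hk : k ≠ 0) (a : ℝ) :
    ∫ x in (0 : ℝ)..a, sin (k * (a - x)) * sin (k * x) = (sin (k * a) / k - a * cos (k * a)) / 2 := by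
  have h : ∀ x, sin (k * (a - x)) * sin (k * x) = (cos (k * a - 2 * k * x) - cos (k * a)) / 2 := by
    intro x
    rw [show k * a - 2 * k * x = k * (a - x) - k * x by ring,
      show k * a = k * (a - x) + k * x by ring, cos_sub, cos_add]
    ring
  simp_rw [h]
  rw [intervalIntegral.integral_div, intervalIntegral.integral_sub
    (by apply Continuous.intervalIntegrable; fun_prop) intervalIntegrable_const,
    intervalIntegral.integral_comp_sub_mul (fun x => cos x) (by positivity), integral_cos,
    intervalIntegral.integral_const, show k * a - 2 * k * a = -(k * a) by ring, mul_zero,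
    sub_zero, sin_neg, smul_eq_mul, smul_eq_mul]
  field_simp
  ring

theorem integral_sin_mul_sub_sq_add_sin_mul_sq_add_cross {k : ℝ} (hk : k ≠ 0) (a c : ℝ) :
    ∫ x in (0 : ℝ)..a, (sin (k * (a - x)) ^ 2 + sin (k * x) ^ 2
        + 2 * c * (sin (k * (a - x)) * sin (k * x)))
      = a * (1 - c * cos (k * a)) + (c - cos (k * a)) * sin (k * a) / k := by
  have hint : ∀ f : ℝ → ℝ, Continuous f → IntervalIntegrable f volume 0 a :=
    fun f hf => hf.intervalIntegrable 0 a
  rw [intervalIntegral.integral_add (hint _ (by fun_prop)) (hint _ (by fun_prop)),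
    intervalIntegral.integral_add (hint _ (by fun_prop)) (hint _ (by fun_prop)),
    intervalIntegral.integral_const_mul, integral_sin_mul_sub_sq hk, integral_sin_mul_sq hk,
    integral_sin_mul_sub_mul_sin_mul hk]
  field_simp
  ring

theorem bloch_eigenvector_norm_delta_general (l1 l2 l3 : ℝ) (hl2 : 0 < l2)
    (τ : ℝ) (k : ℝ)
    (hs : Real.sin (k * l2) ≠ 0)
    (hdisp : 2 * Real.cos (k * l2) / Real.sin (k * l2)
        - 2 * Real.cos τ / Real.sin (k * l2) = k * (l1 + l3))
    (u : ℝ → ℂ)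
    (hu : u = fun x : ℝ => Complex.exp (-(Complex.I * (τ : ℂ) * (x : ℂ))) *
      ((Complex.sin ((k : ℂ) * ((l2 : ℂ) - (x : ℂ))) +
        Complex.exp (Complex.I * (τ : ℂ)) * Complex.sin ((k : ℂ) * (x : ℂ))) /
        Complex.sin ((k : ℂ) * (l2 : ℂ)))) :
    (∫ x in Set.Ioo (0 : ℝ) l2, ‖u x‖ ^ 2) + (l1 + l3)
      = (l1 + l3) / 2 +
        l2 * (1 - Real.cos τ * Real.cos (k * l2)) / (Real.sin (k * l2)) ^ 2 := by
  have hk : k ≠ 0 := by rintro rfl; simp at hs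
  have hnorm : ∀ x : ℝ, ‖u x‖ ^ 2 = (sin (k * (l2 - x)) ^ 2 + sin (k * x) ^ 2
      + 2 * cos τ * (sin (k * (l2 - x)) * sin (k * x))) / sin (k * l2) ^ 2 := by
    intro x
    have hphase : ‖Complex.exp (-(Complex.I * τ * x))‖ = 1 := by
      simpa [mul_assoc] using Complex.norm_exp_I_mul_ofReal (-(τ * x))
    simp only [hu, norm_mul, hphase, one_mul, norm_div, div_pow, ← Complex.ofReal_mul,
      ← Complex.ofReal_sub, ← Complex.ofReal_sin, sq_norm_ofReal_add_exp_mul_ofReal,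
      Complex.norm_real, norm_eq_abs, sq_abs]
    ring
  rw [← integral_Ioc_eq_integral_Ioo, ← intervalIntegral.integral_of_le hl2.le]
  simp_rw [hnorm]
  rw [intervalIntegral.integral_div, integral_sin_mul_sub_sq_add_sin_mul_sq_add_cross hk]
  field_simp at hdisp ⊢
  linear_combination -sin (k * l2) * hdisp

/-- Section 6.1 of the paper: the squared norm in `H_hom = L²(0,l2) ⊕ ℂ` of the Bloch
eigenvector `ū(k) = (u(1, e^{i(l1+l3)τ}; ·), √(l1+l3))` of the homogenised operator
`A_hom^{(τ)}` at an eigenvalue `k²` satisfying the dispersion relation (6.4). -/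
theorem bloch_eigenvector_norm_delta (l1 l2 l3 : ℝ) (hl1 : 0 < l1) (hl2 : 0 < l2)
    (hl3 : 0 < l3) (hsum : l1 + l2 + l3 = 1) (τ : ℝ) (k : ℝ) (hk : 0 < k)
    (hs : Real.sin (k * l2) ≠ 0)
    (hdisp : 2 * Real.cos (k * l2) / Real.sin (k * l2)
        - 2 * Real.cos τ / Real.sin (k * l2) = k * (l1 + l3))
    (u : ℝ → ℂ)
    (hu : u = fun x : ℝ => Complex.exp (-(Complex.I * (τ : ℂ) * (x : ℂ))) *
      ((Complex.sin ((k : ℂ) * ((l2 : ℂ) - (x : ℂ))) +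
        Complex.exp (Complex.I * (τ : ℂ)) * Complex.sin ((k : ℂ) * (x : ℂ))) /
        Complex.sin ((k : ℂ) * (l2 : ℂ)))) :
    (∫ x in Set.Ioo (0 : ℝ) l2, ‖u x‖ ^ 2) + (l1 + l3)
      = (l1 + l3) / 2 +
        l2 * (1 - Real.cos τ * Real.cos (k * l2)) / (Real.sin (k * l2)) ^ 2 :=
  bloch_eigenvector_norm_delta_general l1 l2 l3 hl2 τ k hs hdisp u hu
end

section
/- Let l1,l2,l3>0 with l1+l2+l3=1, τ'∈ℝ, and k∈ℂ with sin(kl2)≠0. Define v(x) := e^{−iτ'x}·(cos(k(l2−x)) + e^{iτ'}·cos(kx))/sin(kl2) on [0,l2]. Then: (i) −(v''+2iτ'v'−(τ')²v) = k²v on (0,l2); (ii) (v'+iτ'v)(0) = k and −e^{−i(l1+l3)τ'}·(v'+iτ'v)(l2) = k; and (iii) the δ'-type condition v(0) + e^{−i(l1+l3)τ'}·v(l2) = (l1+l3)·(v'+iτ'v)(0) holds if and only if 2cot(kl2) + 2cos(τ')/sin(kl2) = k(l1+l3). -/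
/-!
Write `v = e^{-iτ'x} w` with `w(x) = (cos k(l2 - x) + e^{iτ'} cos kx) / sin(k l2)`. The gauge
factor turns `v' + iτ'v` into `e^{-iτ'x} w'` and `v'' + 2iτ'v' - τ'²v` into `e^{-iτ'x} w''`, so
the equation reduces to `w'' = -k²w` and the boundary data to `w'(0) = k`, `w'(l2) = -e^{iτ'}k`.
Since `l1 + l2 + l3 = 1`, the phase `e^{-i(l1+l3)τ'} e^{-iτ'l2}` is `e^{-iτ'}`: it cancels
`e^{iτ'}` at `l2`, and in the `δ'`-condition it pairs with `e^{iτ'}` to give `2 cos τ'`.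
-/

open Complex

noncomputable section

def blochGauge (τ : ℝ) (w : ℝ → ℂ) : ℝ → ℂ := fun x => exp (-(I * τ * x)) * w x

section Gauge

variable (τ : ℝ) {w w₁ w₂ : ℝ → ℂ}

theorem hasDerivAt_blochGauge {w' : ℂ} {x : ℝ} (hw : HasDerivAt w w' x) :
    HasDerivAt (blochGauge τ w) (exp (-(I * τ * x)) * (w' - I * τ * w x)) x := by
  have hphase : HasDerivAt (fun y : ℝ => exp (-(I * τ * y))) (exp (-(I * τ * x)) * -(I * τ)) x :=
    (hasDerivAt_const_mul (I * τ)).neg.cexp.comp_ofReal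
  exact (hphase.mul hw).congr_deriv (by ring)

theorem deriv_blochGauge_add {w' : ℂ} {x : ℝ} (hw : HasDerivAt w w' x) :
    deriv (blochGauge τ w) x + I * τ * blochGauge τ w x = exp (-(I * τ * x)) * w' := by
  rw [(hasDerivAt_blochGauge τ hw).deriv, blochGauge]
  ring

theorem deriv_deriv_blochGauge (h₁ : ∀ x, HasDerivAt w (w₁ x) x) (h₂ : ∀ x, HasDerivAt w₁ (w₂ x) x)
    (x : ℝ) :
    deriv (deriv (blochGauge τ w)) x + 2 * I * τ * deriv (blochGauge τ w) x
        - (τ : ℂ) ^ 2 * blochGauge τ w x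
      = exp (-(I * τ * x)) * w₂ x := by
  have hd : deriv (blochGauge τ w) = blochGauge τ (fun y => w₁ y - I * τ * w y) :=
    funext fun y => (hasDerivAt_blochGauge τ (h₁ y)).deriv
  have h₁' : HasDerivAt (fun y => w₁ y - I * τ * w y) (w₂ x - I * τ * w₁ x) x :=
    (h₂ x).sub ((h₁ x).const_mul _)
  rw [hd, (hasDerivAt_blochGauge τ h₁').deriv]
  simp only [blochGauge]
  linear_combination (-(τ : ℂ) ^ 2 * exp (-(I * τ * x)) * w x) * I_sq

end Gauge

section Profile

variable (k : ℂ) (a : ℝ) (c : ℂ)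

def cosineProfile (x : ℝ) : ℂ := (cos (k * (a - x)) + c * cos (k * x)) / sin (k * a)

def cosineProfileDeriv (x : ℝ) : ℂ := k * (sin (k * (a - x)) - c * sin (k * x)) / sin (k * a)

theorem hasDerivAt_cosineProfile (x : ℝ) :
    HasDerivAt (cosineProfile k a c) (cosineProfileDeriv k a c x) x := by
  have hlin := ((hasDerivAt_id' (x : ℂ)).const_sub (a : ℂ)).const_mul k
  have hdil := hasDerivAt_const_mul (x := (x : ℂ)) k
  exact ((hlin.ccos.add (hdil.ccos.const_mul c)).div_const (sin (k * a))).comp_ofReal.congr_deriv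
    (by rw [cosineProfileDeriv]; ring)

theorem hasDerivAt_cosineProfileDeriv (x : ℝ) :
    HasDerivAt (cosineProfileDeriv k a c) (-k ^ 2 * cosineProfile k a c x) x := by
  have hlin := ((hasDerivAt_id' (x : ℂ)).const_sub (a : ℂ)).const_mul k
  have hdil := hasDerivAt_const_mul (x := (x : ℂ)) k
  exact (((hlin.csin.sub (hdil.csin.const_mul c)).const_mul k).div_const
    (sin (k * a))).comp_ofReal.congr_deriv (by rw [cosineProfile]; ring)

theorem cosineProfile_zero : cosineProfile k a c 0 = (cos (k * a) + c) / sin (k * a) := by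
  simp [cosineProfile]

theorem cosineProfile_self : cosineProfile k a c a = (1 + c * cos (k * a)) / sin (k * a) := by
  simp [cosineProfile]

theorem cosineProfileDeriv_zero (h : sin (k * a) ≠ 0) : cosineProfileDeriv k a c 0 = k := by
  rw [cosineProfileDeriv, ofReal_zero, sub_zero, mul_zero, sin_zero, mul_zero, sub_zero]
  field_simp

theorem cosineProfileDeriv_self (h : sin (k * a) ≠ 0) : cosineProfileDeriv k a c a = -(c * k) := by
  rw [cosineProfileDeriv, sub_self, mul_zero, sin_zero]
  field_simp
  ring

end Profile

theorem exp_neg_I_mul_add_of_add_eq_one {l1 l2 l3 : ℝ} (hsum : l1 + l2 + l3 = 1) (τ : ℝ) :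
    exp (-(I * (((l1 + l3) * τ : ℝ) : ℂ))) * exp (-(I * τ * l2)) = exp (-(I * τ)) := by
  have hl : (l1 : ℂ) + l3 = 1 - l2 := by exact_mod_cast (by linarith : l1 + l3 = 1 - l2)
  rw [← exp_add]
  congr 1
  push_cast
  linear_combination (-(I * τ)) * hl

theorem bloch_eigenfunction_delta_prime_general (l1 l2 l3 : ℝ) (hsum : l1 + l2 + l3 = 1) (τ' : ℝ) (k : ℂ)
    (hs : Complex.sin (k * l2) ≠ 0) (v : ℝ → ℂ)
    (hv : v = fun x : ℝ => Complex.exp (-(Complex.I * (τ' : ℂ) * (x : ℂ))) *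
      ((Complex.cos (k * ((l2 : ℂ) - (x : ℂ))) +
        Complex.exp (Complex.I * (τ' : ℂ)) * Complex.cos (k * (x : ℂ))) /
        Complex.sin (k * l2))) :
    (∀ x ∈ Set.Ioo (0 : ℝ) l2,
      -(deriv (deriv v) x + 2 * Complex.I * (τ' : ℂ) * deriv v x - (τ' : ℂ) ^ 2 * v x)
        = k ^ 2 * v x) ∧
    (deriv v 0 + Complex.I * (τ' : ℂ) * v 0) = k ∧
    -(Complex.exp (-(Complex.I * (((l1 + l3) * τ' : ℝ) : ℂ))) *
        (deriv v l2 + Complex.I * (τ' : ℂ) * v l2)) = k ∧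
    ((v 0 + Complex.exp (-(Complex.I * (((l1 + l3) * τ' : ℝ) : ℂ))) * v l2
        = ((l1 + l3 : ℝ) : ℂ) * (deriv v 0 + Complex.I * (τ' : ℂ) * v 0)) ↔
      (2 * Complex.cos (k * l2) / Complex.sin (k * l2)
          + 2 * Complex.cos (τ' : ℂ) / Complex.sin (k * l2)
        = k * ((l1 + l3 : ℝ) : ℂ))) := by
  set c := exp (I * τ')
  have hvg : v = blochGauge τ' (cosineProfile k l2 c) := hv
  have hphase := exp_neg_I_mul_add_of_add_eq_one hsum τ'
  have hcc : exp (-(I * τ')) * c = 1 := by rw [← exp_add]; simp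
  have hcos : 2 * cos τ' = c + exp (-(I * τ')) := by
    rw [two_cos, neg_mul, mul_comm]
  have hleft : deriv v 0 + I * τ' * v 0 = k := by
    rw [hvg, deriv_blochGauge_add τ' (hasDerivAt_cosineProfile k l2 c 0),
      cosineProfileDeriv_zero k l2 c hs]
    simp
  refine ⟨fun x _ => ?_, hleft, ?_, ?_⟩
  · rw [hvg, deriv_deriv_blochGauge τ' (hasDerivAt_cosineProfile k l2 c)
      (hasDerivAt_cosineProfileDeriv k l2 c), blochGauge]
    ring
  · rw [hvg, deriv_blochGauge_add τ' (hasDerivAt_cosineProfile k l2 c l2),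
      cosineProfileDeriv_self k l2 c hs, ← mul_assoc, hphase]
    linear_combination k * hcc
  · have hcondition : v 0 + exp (-(I * (((l1 + l3) * τ' : ℝ) : ℂ))) * v l2
        = (2 * cos (k * l2) + 2 * cos τ') / sin (k * l2) := by
      rw [hvg, blochGauge, blochGauge, ← mul_assoc, hphase, cosineProfile_zero,
        cosineProfile_self, ofReal_zero, mul_zero, neg_zero, exp_zero, one_mul]
      field_simp
      linear_combination cos (k * l2) * hcc - hcos
    rw [hleft, hcondition, add_div, mul_comm _ k]

/-- Section 6.2 of the paper: the Bloch eigenfunctions of the `δ'`-type operator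
`A'_hom(τ')`.  The explicit function `v(x) = e^{−iτ'x}(cos k(l2−x) + e^{iτ'} cos kx)/sin(k l2)`
solves the spectral equation, has (weighted) co-normal boundary data equal to `k` at both
endpoints, and satisfies the `δ'`-type condition iff the dispersion relation
`2 cot(k l2) + 2 cos τ' / sin(k l2) = k(l1+l3)` holds. -/
theorem bloch_eigenfunction_delta_prime (l1 l2 l3 : ℝ) (hl1 : 0 < l1) (hl2 : 0 < l2)
    (hl3 : 0 < l3) (hsum : l1 + l2 + l3 = 1) (τ' : ℝ) (k : ℂ)
    (hs : Complex.sin (k * l2) ≠ 0) (v : ℝ → ℂ)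
    (hv : v = fun x : ℝ => Complex.exp (-(Complex.I * (τ' : ℂ) * (x : ℂ))) *
      ((Complex.cos (k * ((l2 : ℂ) - (x : ℂ))) +
        Complex.exp (Complex.I * (τ' : ℂ)) * Complex.cos (k * (x : ℂ))) /
        Complex.sin (k * l2))) :
    (∀ x ∈ Set.Ioo (0 : ℝ) l2,
      -(deriv (deriv v) x + 2 * Complex.I * (τ' : ℂ) * deriv v x - (τ' : ℂ) ^ 2 * v x)
        = k ^ 2 * v x) ∧
    (deriv v 0 + Complex.I * (τ' : ℂ) * v 0) = k ∧
    -(Complex.exp (-(Complex.I * (((l1 + l3) * τ' : ℝ) : ℂ))) *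
        (deriv v l2 + Complex.I * (τ' : ℂ) * v l2)) = k ∧
    ((v 0 + Complex.exp (-(Complex.I * (((l1 + l3) * τ' : ℝ) : ℂ))) * v l2
        = ((l1 + l3 : ℝ) : ℂ) * (deriv v 0 + Complex.I * (τ' : ℂ) * v 0)) ↔
      (2 * Complex.cos (k * l2) / Complex.sin (k * l2)
          + 2 * Complex.cos (τ' : ℂ) / Complex.sin (k * l2)
        = k * ((l1 + l3 : ℝ) : ℂ))) :=
  bloch_eigenfunction_delta_prime_general l1 l2 l3 hsum τ' k hs v hv
end
end

section
/- Let l1,l2,l3>0 with l1+l2+l3=1, τ'∈ℝ, and k>0 real with sin(kl2)≠0, and suppose 2cot(kl2) + 2cos(τ')/sin(kl2) = k(l1+l3). Define v(x) := e^{−iτ'x}·(cos(k(l2−x)) + e^{iτ'}·cos(kx))/sin(kl2). Then ∫₀^{l2} |v(x)|² dx = (l1+l3)/2 + l2·(1 + cos(τ')·cos(kl2))/sin²(kl2). In particular, if τ' = τ + π then this quantity equals (l1+l3)/2 + l2·(1 − cos(τ)·cos(kl2))/sin²(kl2). -/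
/-!
Since `‖exp (-iτ'x)‖ = 1`, product-to-sum formulas give
`sin² (k l2) ‖v x‖² = 1 + cos τ' cos (k l2) + (cos (k l2) + cos τ') cos (k l2 - 2 k x)`.
Integrating over `(0, l2)` yields
`l2 (1 + cos τ' cos (k l2)) + (cos (k l2) + cos τ') sin (k l2) / k`,
and the dispersion relation turns the second term into `(l1 + l3) sin² (k l2) / 2`.
-/

open MeasureTheory

theorem Complex.sq_norm_ofReal_add_exp_mul_I_mul (a b τ : ℝ) :
    ‖(a : ℂ) + Complex.exp (Complex.I * τ) * b‖ ^ 2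
      = a ^ 2 + b ^ 2 + 2 * Real.cos τ * a * b := by
  rw [Complex.sq_norm, mul_comm Complex.I, Complex.exp_mul_I, ← Complex.ofReal_cos,
    ← Complex.ofReal_sin, Complex.normSq_apply]
  simp only [Complex.add_re, Complex.add_im, Complex.mul_re, Complex.mul_im, Complex.ofReal_re,
    Complex.ofReal_im, Complex.I_re, Complex.I_im]
  linear_combination b ^ 2 * Real.sin_sq_add_cos_sq τ

theorem Real.cos_sq_add_cos_sq_add_mul_cos_mul_cos (a b c : ℝ) :
    Real.cos a ^ 2 + Real.cos b ^ 2 + 2 * c * Real.cos a * Real.cos b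
      = 1 + c * Real.cos (a + b) + (Real.cos (a + b) + c) * Real.cos (a - b) := by
  rw [Real.cos_add, Real.cos_sub]
  linear_combination Real.sin b ^ 2 * Real.sin_sq_add_cos_sq a
    + (1 - Real.cos a ^ 2) * Real.sin_sq_add_cos_sq b

theorem integral_cos_mul_sub_two_mul {k : ℝ} (hk : k ≠ 0) (l : ℝ) :
    ∫ x in (0 : ℝ)..l, Real.cos (k * l - 2 * k * x) = Real.sin (k * l) / k := by
  rw [intervalIntegral.integral_comp_sub_mul Real.cos (mul_ne_zero two_ne_zero hk), integral_cos,
    show k * l - 2 * k * l = -(k * l) by ring, Real.sin_neg, smul_eq_mul, mul_zero, sub_zero,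
    sub_neg_eq_add]
  field_simp
  ring

theorem integral_one_add_mul_cos_add_mul_cos_sub_two_mul {k : ℝ} (hk : k ≠ 0) (l c : ℝ) :
    ∫ x in (0 : ℝ)..l,
        (1 + c * Real.cos (k * l) + (Real.cos (k * l) + c) * Real.cos (k * l - 2 * k * x))
      = l * (1 + c * Real.cos (k * l)) + (Real.cos (k * l) + c) * Real.sin (k * l) / k := by
  rw [intervalIntegral.integral_add intervalIntegrable_const
      (by apply Continuous.intervalIntegrable; fun_prop),
    intervalIntegral.integral_const_mul, integral_cos_mul_sub_two_mul hk,
    intervalIntegral.integral_const, smul_eq_mul, sub_zero, mul_div_assoc]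

theorem sq_norm_exp_mul_cos_add_exp_mul_cos_div_sin (τ k l x : ℝ) :
    ‖Complex.exp (-(Complex.I * τ * x)) *
      ((Complex.cos (k * (l - x)) + Complex.exp (Complex.I * τ) * Complex.cos (k * x)) /
        Complex.sin (k * l))‖ ^ 2
      = (1 + Real.cos τ * Real.cos (k * l)
          + (Real.cos (k * l) + Real.cos τ) * Real.cos (k * l - 2 * k * x))
        / Real.sin (k * l) ^ 2 := by
  have hphase : ‖Complex.exp (-(Complex.I * τ * x))‖ = 1 := by
    rw [show -(Complex.I * τ * x) = ((-(τ * x) : ℝ) : ℂ) * Complex.I by push_cast; ring]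
    exact Complex.norm_exp_ofReal_mul_I _
  have hsin : ‖Complex.sin (k * l)‖ ^ 2 = Real.sin (k * l) ^ 2 := by
    rw [← Complex.ofReal_mul, ← Complex.ofReal_sin, Complex.norm_real, Real.norm_eq_abs, sq_abs]
  have hcos := Real.cos_sq_add_cos_sq_add_mul_cos_mul_cos (k * (l - x)) (k * x) (Real.cos τ)
  rw [show k * (l - x) + k * x = k * l by ring,
    show k * (l - x) - k * x = k * l - 2 * k * x by ring] at hcos
  have hnum :=
    Complex.sq_norm_ofReal_add_exp_mul_I_mul (Real.cos (k * (l - x))) (Real.cos (k * x)) τ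
  push_cast at hnum
  rw [norm_mul, hphase, one_mul, norm_div, div_pow, hsin, hnum, hcos]

theorem bloch_eigenfunction_norm_delta_prime_general (l1 l2 l3 : ℝ)
    (hl2 : 0 < l2) (τ' : ℝ) (k : ℝ) (hk : 0 < k)
    (hs : Real.sin (k * l2) ≠ 0)
    (hdisp : 2 * Real.cos (k * l2) / Real.sin (k * l2)
        + 2 * Real.cos τ' / Real.sin (k * l2) = k * (l1 + l3))
    (v : ℝ → ℂ)
    (hv : v = fun x : ℝ => Complex.exp (-(Complex.I * (τ' : ℂ) * (x : ℂ))) *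
      ((Complex.cos ((k : ℂ) * ((l2 : ℂ) - (x : ℂ))) +
        Complex.exp (Complex.I * (τ' : ℂ)) * Complex.cos ((k : ℂ) * (x : ℂ))) /
        Complex.sin ((k : ℂ) * (l2 : ℂ)))) :
    (∫ x in Set.Ioo (0 : ℝ) l2, ‖v x‖ ^ 2)
        = (l1 + l3) / 2 +
          l2 * (1 + Real.cos τ' * Real.cos (k * l2)) / (Real.sin (k * l2)) ^ 2 ∧
    ∀ τ : ℝ, τ' = τ + Real.pi →
      (∫ x in Set.Ioo (0 : ℝ) l2, ‖v x‖ ^ 2)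
        = (l1 + l3) / 2 +
          l2 * (1 - Real.cos τ * Real.cos (k * l2)) / (Real.sin (k * l2)) ^ 2 := by
  have hintegral : (∫ x in Set.Ioo (0 : ℝ) l2, ‖v x‖ ^ 2)
      = (l2 * (1 + Real.cos τ' * Real.cos (k * l2))
          + (Real.cos (k * l2) + Real.cos τ') * Real.sin (k * l2) / k)
        / Real.sin (k * l2) ^ 2 := by
    simp_rw [hv, sq_norm_exp_mul_cos_add_exp_mul_cos_div_sin]
    rw [← integral_Ioc_eq_integral_Ioo, ← intervalIntegral.integral_of_le hl2.le,
      intervalIntegral.integral_div, integral_one_add_mul_cos_add_mul_cos_sub_two_mul hk.ne']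
  have hnorm : (∫ x in Set.Ioo (0 : ℝ) l2, ‖v x‖ ^ 2)
      = (l1 + l3) / 2 + l2 * (1 + Real.cos τ' * Real.cos (k * l2)) / (Real.sin (k * l2)) ^ 2 := by
    rw [hintegral]
    set S := Real.sin (k * l2)
    set C := Real.cos (k * l2)
    field_simp
    field_simp at hdisp
    linear_combination S * hdisp
  refine ⟨hnorm, fun τ hτ => ?_⟩
  rw [hnorm, hτ, Real.cos_add_pi, neg_mul, ← sub_eq_add_neg]

/-- Section 6.2 of the paper: the squared `L²(0,l2)` norm of the Bloch eigenfunction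
`v(·;k)` of the `δ'`-type operator `A'_hom(τ')` at an eigenvalue `k²` satisfying the
dispersion relation (6.7); for `τ' = τ + π` it coincides with the norm of the
corresponding eigenvector of `A_hom^{(τ)}`. -/
theorem bloch_eigenfunction_norm_delta_prime (l1 l2 l3 : ℝ) (hl1 : 0 < l1)
    (hl2 : 0 < l2) (hl3 : 0 < l3) (hsum : l1 + l2 + l3 = 1) (τ' : ℝ) (k : ℝ) (hk : 0 < k)
    (hs : Real.sin (k * l2) ≠ 0)
    (hdisp : 2 * Real.cos (k * l2) / Real.sin (k * l2)
        + 2 * Real.cos τ' / Real.sin (k * l2) = k * (l1 + l3))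
    (v : ℝ → ℂ)
    (hv : v = fun x : ℝ => Complex.exp (-(Complex.I * (τ' : ℂ) * (x : ℂ))) *
      ((Complex.cos ((k : ℂ) * ((l2 : ℂ) - (x : ℂ))) +
        Complex.exp (Complex.I * (τ' : ℂ)) * Complex.cos ((k : ℂ) * (x : ℂ))) /
        Complex.sin ((k : ℂ) * (l2 : ℂ)))) :
    (∫ x in Set.Ioo (0 : ℝ) l2, ‖v x‖ ^ 2)
        = (l1 + l3) / 2 +
          l2 * (1 + Real.cos τ' * Real.cos (k * l2)) / (Real.sin (k * l2)) ^ 2 ∧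
    ∀ τ : ℝ, τ' = τ + Real.pi →
      (∫ x in Set.Ioo (0 : ℝ) l2, ‖v x‖ ^ 2)
        = (l1 + l3) / 2 +
          l2 * (1 - Real.cos τ * Real.cos (k * l2)) / (Real.sin (k * l2)) ^ 2 :=
  bloch_eigenfunction_norm_delta_prime_general l1 l2 l3 hl2 τ' k hk hs hdisp v hv
end

section
/- Let l1,l2,l3>0 with l1+l2+l3=1, τ∈[0,2π), and k>0 real with sin(kl2) = 0. Then there exists a nonzero u ∈ W^{2,2}(0,l2) satisfying −(u''+2iτu'−τ²u) = k²u on (0,l2), u(0) = e^{−i(l1+l3)τ}·u(l2), and (u'+iτu)(0) − e^{−i(l1+l3)τ}·(u'+iτu)(l2) = −k²(l1+l3)·u(0), if and only if cos(kl2) = e^{iτ}, i.e. if and only if either τ=0 and cos(kl2)=1, or τ=π and cos(kl2)=−1; in that case u(x) = e^{−iτx}·sin(kx) is such a solution. -/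
/-!
The gauge transform `v = e^{iτx} u` turns the equation into `v'' + k² v = 0`. Conservation of the
Wronskians of `v` with `cos (k x)` and `sin (k x)` gives `v(l2) = cos(k l2) v(0)` and
`v'(l2) = cos(k l2) v'(0)` when `sin(k l2) = 0`, so the boundary conditions become
`(1 - e^{-iτ} cos(k l2)) v(0) = 0` and `(1 - e^{-iτ} cos(k l2)) v'(0) = -k²(l1+l3) v(0)`.
Unless `cos(k l2) = e^{iτ}` this forces `v(0) = v'(0) = 0`, hence `v = 0`; conversely, if
`cos(k l2) = e^{iτ}` then `v = sin(k x)` satisfies both conditions. As `cos(k l2)` is real,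
`e^{iτ}` must be real, which for `τ ∈ [0, 2π)` means `τ ∈ {0, π}`.
-/

noncomputable section

/-- `u` (with derivative data `u'`, `u''`) is an `W^{2,2}`(0,l2) solution of the
eigenvalue problem `((1/i)d/dx + τ)² u = k² u` with the boundary conditions of the
homogenised operator `A_hom^{(τ)}` at energy `z = k²`. -/
def IsNonBlochEigenfunction (l1 l2 l3 τ k : ℝ) (u u' u'' : ℝ → ℂ) : Prop :=
  (∀ x ∈ Set.Icc (0 : ℝ) l2, HasDerivAt u (u' x) x ∧ HasDerivAt u' (u'' x) x) ∧
  (∀ x ∈ Set.Ioo (0 : ℝ) l2,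
    -(u'' x + 2 * Complex.I * (τ : ℂ) * u' x - (τ : ℂ) ^ 2 * u x) = ((k : ℂ)) ^ 2 * u x) ∧
  u 0 = Complex.exp (-(Complex.I * (((l1 + l3) * τ : ℝ) : ℂ))) * u l2 ∧
  (u' 0 + Complex.I * (τ : ℂ) * u 0) -
      Complex.exp (-(Complex.I * (((l1 + l3) * τ : ℝ) : ℂ))) *
        (u' l2 + Complex.I * (τ : ℂ) * u l2)
    = -(((k : ℂ)) ^ 2 * ((l1 + l3 : ℝ) : ℂ) * u 0)

open Set Complex

theorem eq_of_hasDerivAt_eq_zero_Ioo {E : Type*} [NormedAddCommGroup E] [NormedSpace ℝ E]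
    {f : ℝ → E} {a b x y : ℝ} (hf : ContinuousOn f (Icc a b))
    (hf' : ∀ t ∈ Ioo a b, HasDerivAt f 0 t) (hx : x ∈ Icc a b) (hy : y ∈ Icc a b) :
    f x = f y := by
  rcases lt_or_ge a b with hab | hba
  · have hmid : (a + b) / 2 ∈ Ioo a b := ⟨by linarith, by linarith⟩
    have hconst : EqOn f (fun _ => f ((a + b) / 2)) (Ioo a b) := fun t ht =>
      isOpen_Ioo.is_const_of_deriv_eq_zero isPreconnected_Ioo
        (fun s hs => (hf' s hs).differentiableAt.differentiableWithinAt)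
        (fun s hs => (hf' s hs).deriv) ht hmid
    have hIcc := hconst.of_subset_closure hf continuousOn_const Ioo_subset_Icc_self
      (closure_Ioo hab.ne).ge
    rw [hIcc hx, hIcc hy]
  · rw [le_antisymm (hx.2.trans hba) hx.1, le_antisymm (hy.2.trans hba) hy.1]

theorem hasDerivAt_sin_mul (k : ℂ) (x : ℝ) :
    HasDerivAt (fun t : ℝ => sin (k * t)) (k * cos (k * x)) x := by
  simpa [mul_comm] using (((hasDerivAt_id (x : ℂ)).const_mul k).csin).comp_ofReal

theorem hasDerivAt_cos_mul (k : ℂ) (x : ℝ) :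
    HasDerivAt (fun t : ℝ => cos (k * t)) (-(k * sin (k * x))) x := by
  simpa [mul_comm] using (((hasDerivAt_id (x : ℂ)).const_mul k).ccos).comp_ofReal

theorem hasDerivAt_exp_mul_mul (a : ℂ) {u : ℝ → ℂ} {d : ℂ} {x : ℝ} (hu : HasDerivAt u d x) :
    HasDerivAt (fun t : ℝ => exp (a * t) * u t) (exp (a * x) * (d + a * u x)) x := by
  refine ((((hasDerivAt_id (x : ℂ)).const_mul a).cexp.comp_ofReal).mul hu).congr_deriv ?_
  simp only [id, mul_one]
  ring

theorem Real.sin_eq_zero_iff_of_nonneg_of_lt_two_pi {x : ℝ} (h0 : 0 ≤ x) (h2π : x < 2 * Real.pi) :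
    Real.sin x = 0 ↔ x = 0 ∨ x = Real.pi := by
  refine ⟨fun hs => ?_, by rintro (rfl | rfl) <;> simp⟩
  rcases lt_or_ge x Real.pi with h | h
  · exact .inl ((Real.sin_eq_zero_iff_of_lt_of_lt (by linarith [Real.pi_pos]) h).1 hs)
  · have := (Real.sin_eq_zero_iff_of_lt_of_lt (x := x - Real.pi) (by linarith [Real.pi_pos])
      (by linarith)).1 (by rw [Real.sin_sub_pi, hs, neg_zero])
    exact .inr (by linarith)

theorem ofReal_eq_exp_I_mul_iff {c τ : ℝ} (h0 : 0 ≤ τ) (h2π : τ < 2 * Real.pi) :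
    (c : ℂ) = exp (I * τ) ↔ (τ = 0 ∧ c = 1) ∨ (τ = Real.pi ∧ c = -1) := by
  rw [mul_comm, exp_mul_I, ← ofReal_cos, ← ofReal_sin, Complex.ext_iff]
  simp only [add_re, add_im, ofReal_re, ofReal_im, mul_re, mul_im, I_re, I_im, mul_zero,
    mul_one, sub_zero, add_zero, zero_add]
  refine ⟨fun ⟨hc, hs⟩ => ?_, by rintro (⟨rfl, rfl⟩ | ⟨rfl, rfl⟩) <;> simp⟩
  rcases (Real.sin_eq_zero_iff_of_nonneg_of_lt_two_pi h0 h2π).1 hs.symm with rfl | rfl <;>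
    simp [hc]

theorem hasDerivAt_exp_mul_mul₂ (a : ℂ) {u u' u'' : ℝ → ℂ} {x : ℝ}
    (hu : HasDerivAt u (u' x) x ∧ HasDerivAt u' (u'' x) x) :
    HasDerivAt (fun t : ℝ => exp (a * t) * u t) (exp (a * x) * (u' x + a * u x)) x ∧
      HasDerivAt (fun t : ℝ => exp (a * t) * (u' t + a * u t))
        (exp (a * x) * (u'' x + 2 * a * u' x + a ^ 2 * u x)) x :=
  ⟨hasDerivAt_exp_mul_mul a hu.1,
    (hasDerivAt_exp_mul_mul a (hu.2.fun_add (hu.1.const_mul a))).congr_deriv (by ring)⟩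

section Harmonic

variable {L : ℝ} {k : ℂ} {v v' v'' : ℝ → ℂ}

theorem harmonic_eq_cos_sin
    (hv : ∀ x ∈ Icc 0 L, HasDerivAt v (v' x) x ∧ HasDerivAt v' (v'' x) x)
    (hode : ∀ x ∈ Ioo 0 L, v'' x + k ^ 2 * v x = 0) {x : ℝ} (hx : x ∈ Icc 0 L) :
    k * v x = k * v 0 * cos (k * x) + v' 0 * sin (k * x) ∧
      v' x = v' 0 * cos (k * x) - k * v 0 * sin (k * x) := by
  -- the Wronskians of `v` with `cos (k t)` and `sin (k t)` are conserved
  set F : ℝ → ℂ := fun t => k * v t * cos (k * t) - v' t * sin (k * t)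
  set G : ℝ → ℂ := fun t => v' t * cos (k * t) + k * v t * sin (k * t)
  have hF : ∀ t ∈ Icc 0 L, HasDerivAt F (-(sin (k * t) * (v'' t + k ^ 2 * v t))) t := fun t ht =>
    ((((hv t ht).1.const_mul k).mul (hasDerivAt_cos_mul k t)).sub
      ((hv t ht).2.mul (hasDerivAt_sin_mul k t))).congr_deriv (by ring)
  have hG : ∀ t ∈ Icc 0 L, HasDerivAt G (cos (k * t) * (v'' t + k ^ 2 * v t)) t := fun t ht =>
    (((hv t ht).2.mul (hasDerivAt_cos_mul k t)).add
      (((hv t ht).1.const_mul k).mul (hasDerivAt_sin_mul k t))).congr_deriv (by ring)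
  have h0 : (0 : ℝ) ∈ Icc 0 L := ⟨le_rfl, hx.1.trans hx.2⟩
  have hFx : F x = k * v 0 := by
    rw [eq_of_hasDerivAt_eq_zero_Ioo (fun t ht => (hF t ht).continuousAt.continuousWithinAt)
      (fun t ht => by simpa [hode t ht] using hF t (Ioo_subset_Icc_self ht)) hx h0]
    simp [F]
  have hGx : G x = v' 0 := by
    rw [eq_of_hasDerivAt_eq_zero_Ioo (fun t ht => (hG t ht).continuousAt.continuousWithinAt)
      (fun t ht => by simpa [hode t ht] using hG t (Ioo_subset_Icc_self ht)) hx h0]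
    simp [G]
  have hpyth := sin_sq_add_cos_sq (k * x)
  constructor
  · linear_combination cos (k * x) * hFx + sin (k * x) * hGx - k * v x * hpyth
  · linear_combination cos (k * x) * hGx - sin (k * x) * hFx - v' x * hpyth

theorem harmonic_eq_zero_of_quasiperiodic {ω μ : ℂ}
    (hv : ∀ x ∈ Icc 0 L, HasDerivAt v (v' x) x ∧ HasDerivAt v' (v'' x) x)
    (hode : ∀ x ∈ Ioo 0 L, v'' x + k ^ 2 * v x = 0) (hk : k ≠ 0) (hsin : sin (k * L) = 0)
    (hω : ω * cos (k * L) ≠ 1) (h0 : v 0 = ω * v L) (h1 : v' 0 - ω * v' L = μ * v 0)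
    {x : ℝ} (hx : x ∈ Icc 0 L) : v x = 0 := by
  obtain ⟨hvL, hv'L⟩ := harmonic_eq_cos_sin hv hode ⟨hx.1.trans hx.2, le_rfl⟩
  rw [hsin, mul_zero, add_zero] at hvL
  rw [hsin, mul_zero, sub_zero] at hv'L
  have hd : 1 - ω * cos (k * L) ≠ 0 := sub_ne_zero.2 hω.symm
  have hvL' : v L = v 0 * cos (k * L) := mul_left_cancel₀ hk (by rw [hvL]; ring)
  have hv0 : v 0 = 0 := by
    refine (mul_eq_zero.1 ?_).resolve_left hd
    linear_combination h0 + ω * hvL'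
  have hv'0 : v' 0 = 0 := by
    refine (mul_eq_zero.1 ?_).resolve_left hd
    linear_combination h1 + ω * hv'L + μ * hv0
  have hvx := (harmonic_eq_cos_sin hv hode hx).1
  rw [hv0, hv'0] at hvx
  simpa [hk] using hvx

end Harmonic

theorem exp_neg_I_mul_phase {l1 l2 l3 : ℝ} (hsum : l1 + l2 + l3 = 1) (τ : ℝ) :
    exp (-(I * ↑((l1 + l3) * τ))) = exp (-(I * τ)) * exp (I * τ * l2) := by
  rw [← exp_add, show l1 + l3 = 1 - l2 by linarith]
  push_cast
  ring_nf

theorem IsNonBlochEigenfunction.eq_zero {l1 l2 l3 τ k : ℝ} {u u' u'' : ℝ → ℂ}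
    (h : IsNonBlochEigenfunction l1 l2 l3 τ k u u' u'') (hsum : l1 + l2 + l3 = 1)
    (hk : k ≠ 0) (hs : sin (k * l2) = 0) (hC : cos (k * l2) ≠ exp (I * τ))
    {x : ℝ} (hx : x ∈ Icc 0 l2) : u x = 0 := by
  obtain ⟨hderiv, hode, hbc0, hbc1⟩ := h
  rw [exp_neg_I_mul_phase hsum] at hbc0 hbc1
  have hv := harmonic_eq_zero_of_quasiperiodic (ω := exp (-(I * τ))) (μ := -(k ^ 2 * (l1 + l3)))
    (fun t ht => hasDerivAt_exp_mul_mul₂ (I * τ) (hderiv t ht))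
    (fun t ht => by
      linear_combination (-exp (I * τ * t)) * hode t ht + exp (I * τ * t) * τ ^ 2 * u t * I_sq)
    (ofReal_ne_zero.2 hk) hs
    (by rw [Ne, exp_neg, inv_mul_eq_one₀ (exp_ne_zero _)]; exact fun h => hC h.symm)
    (by simp only [ofReal_zero, mul_zero, exp_zero, one_mul]; rw [hbc0]; ring)
    (by simp only [ofReal_zero, mul_zero, exp_zero, one_mul]; push_cast at hbc1 ⊢
        linear_combination hbc1) hx
  simpa using hv

theorem isNonBlochEigenfunction_exp_mul_sin {l1 l2 l3 τ k : ℝ} (hsum : l1 + l2 + l3 = 1)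
    (hs : sin (k * l2) = 0) (hC : cos (k * l2) = exp (I * τ)) :
    ∃ u' u'' : ℝ → ℂ, IsNonBlochEigenfunction l1 l2 l3 τ k
      (fun x : ℝ => exp (-(I * τ * x)) * sin (k * x)) u' u'' := by
  set a : ℂ := -(I * τ)
  have hu : (fun x : ℝ => exp (-(I * τ * x)) * sin (k * x)) =
      fun x : ℝ => exp (a * x) * sin (k * x) := by
    simp only [a, neg_mul]
  rw [hu]
  refine ⟨fun x => exp (a * x) * (k * cos (k * x) + a * sin (k * x)),
    fun x => exp (a * x) *
      (-(k ^ 2 * sin (k * x)) + 2 * a * (k * cos (k * x)) + a ^ 2 * sin (k * x)),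
    fun x _ => hasDerivAt_exp_mul_mul₂ a (u := fun t : ℝ => sin (k * t))
      (u' := fun t => k * cos (k * t)) (u'' := fun t => -(k ^ 2 * sin (k * t)))
      ⟨hasDerivAt_sin_mul k x, ((hasDerivAt_cos_mul k x).const_mul (k : ℂ)).congr_deriv (by ring)⟩,
    fun x _ => ?_, ?_, ?_⟩
  · simp only [a]
    linear_combination (exp (-(I * τ) * x) * τ ^ 2 * sin (k * x)) * I_sq
  · simp [hs]
  · simp only [ofReal_zero, mul_zero, exp_zero, sin_zero, cos_zero, hs, hC,
      exp_neg_I_mul_phase hsum]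
    have hphase : exp (-(I * τ)) * exp (I * τ * l2) * exp (a * l2) * exp (I * τ) = 1 := by
      simp only [← exp_add, a]
      rw [← exp_zero]
      ring_nf
    linear_combination (-(k : ℂ)) * hphase

theorem exists_mem_Icc_exp_mul_sin_ne_zero (τ : ℝ) {k L : ℝ} (hk : 0 < k) (hL : 0 < L)
    (hs : Real.sin (k * L) = 0) :
    ∃ x ∈ Icc 0 L, exp (-(I * τ * x)) * sin (k * x) ≠ 0 := by
  have hπ : Real.pi ≤ k * L :=
    not_lt.1 fun h => (Real.sin_pos_of_pos_of_lt_pi (mul_pos hk hL) h).ne' hs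
  refine ⟨Real.pi / (2 * k), ⟨by positivity, by rw [div_le_iff₀ (by positivity)]; nlinarith⟩, ?_⟩
  have hkx : (k : ℂ) * ↑(Real.pi / (2 * k)) = ↑(Real.pi / 2) := by
    push_cast
    field_simp [ofReal_ne_zero.2 hk.ne']
  rw [hkx, ← ofReal_sin, Real.sin_pi_div_two]
  simp

theorem non_bloch_spectrum_general (l1 l2 l3 : ℝ) (hl2 : 0 < l2)
    (hsum : l1 + l2 + l3 = 1) (τ : ℝ) (hτ0 : 0 ≤ τ) (hτ : τ < 2 * Real.pi)
    (k : ℝ) (hk : 0 < k) (hs : Real.sin (k * l2) = 0) :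
    ((∃ u u' u'' : ℝ → ℂ, IsNonBlochEigenfunction l1 l2 l3 τ k u u' u'' ∧
        ∃ x ∈ Set.Icc (0 : ℝ) l2, u x ≠ 0) ↔
      Complex.cos ((k : ℂ) * (l2 : ℂ)) = Complex.exp (Complex.I * (τ : ℂ))) ∧
    (Complex.cos ((k : ℂ) * (l2 : ℂ)) = Complex.exp (Complex.I * (τ : ℂ)) ↔
      ((τ = 0 ∧ Real.cos (k * l2) = 1) ∨ (τ = Real.pi ∧ Real.cos (k * l2) = -1))) ∧
    (Complex.cos ((k : ℂ) * (l2 : ℂ)) = Complex.exp (Complex.I * (τ : ℂ)) →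
      ∃ u' u'' : ℝ → ℂ,
        IsNonBlochEigenfunction l1 l2 l3 τ k
          (fun x : ℝ => Complex.exp (-(Complex.I * (τ : ℂ) * (x : ℂ))) *
            Complex.sin ((k : ℂ) * (x : ℂ))) u' u'' ∧
        ∃ x ∈ Set.Icc (0 : ℝ) l2,
          Complex.exp (-(Complex.I * (τ : ℂ) * (x : ℂ))) *
            Complex.sin ((k : ℂ) * (x : ℂ)) ≠ 0) := by
  have hsC : sin (k * l2) = 0 := by rw [← ofReal_mul, ← ofReal_sin, hs, ofReal_zero]
  have hexists (hC : cos (k * l2) = exp (I * τ)) : ∃ u' u'' : ℝ → ℂ,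
      IsNonBlochEigenfunction l1 l2 l3 τ k (fun x : ℝ => exp (-(I * τ * x)) * sin (k * x)) u' u'' ∧
        ∃ x ∈ Icc 0 l2, exp (-(I * τ * x)) * sin (k * x) ≠ 0 := by
    obtain ⟨u', u'', hu⟩ := isNonBlochEigenfunction_exp_mul_sin hsum hsC hC
    exact ⟨u', u'', hu, exists_mem_Icc_exp_mul_sin_ne_zero τ hk hl2 hs⟩
  refine ⟨⟨?_, fun hC => ?_⟩, ?_, hexists⟩
  · rintro ⟨u, u', u'', hu, x, hx, hux⟩
    by_contra hC
    exact hux (hu.eq_zero hsum (ne_of_gt hk) hsC hC hx)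
  · obtain ⟨u', u'', hu, hx⟩ := hexists hC
    exact ⟨_, u', u'', hu, hx⟩
  · rw [← ofReal_mul, ← ofReal_cos]
    exact ofReal_eq_exp_I_mul_iff hτ0 hτ

/-- Section 6.3 of the paper: the non-Bloch spectrum of the homogenised operator
`A_hom^{(τ)}`.  At energies `z = k²` with `sin(k l2) = 0` a nontrivial eigenfunction
exists iff `cos(k l2) = e^{iτ}`, i.e. iff `τ = 0` and `cos(k l2) = 1` or `τ = π` and
`cos(k l2) = −1`; in that case `u(x) = e^{−iτx} sin(kx)` is such an eigenfunction. -/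
theorem non_bloch_spectrum (l1 l2 l3 : ℝ) (hl1 : 0 < l1) (hl2 : 0 < l2) (hl3 : 0 < l3)
    (hsum : l1 + l2 + l3 = 1) (τ : ℝ) (hτ0 : 0 ≤ τ) (hτ : τ < 2 * Real.pi)
    (k : ℝ) (hk : 0 < k) (hs : Real.sin (k * l2) = 0) :
    ((∃ u u' u'' : ℝ → ℂ, IsNonBlochEigenfunction l1 l2 l3 τ k u u' u'' ∧
        ∃ x ∈ Set.Icc (0 : ℝ) l2, u x ≠ 0) ↔
      Complex.cos ((k : ℂ) * (l2 : ℂ)) = Complex.exp (Complex.I * (τ : ℂ))) ∧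
    (Complex.cos ((k : ℂ) * (l2 : ℂ)) = Complex.exp (Complex.I * (τ : ℂ)) ↔
      ((τ = 0 ∧ Real.cos (k * l2) = 1) ∨ (τ = Real.pi ∧ Real.cos (k * l2) = -1))) ∧
    (Complex.cos ((k : ℂ) * (l2 : ℂ)) = Complex.exp (Complex.I * (τ : ℂ)) →
      ∃ u' u'' : ℝ → ℂ,
        IsNonBlochEigenfunction l1 l2 l3 τ k
          (fun x : ℝ => Complex.exp (-(Complex.I * (τ : ℂ) * (x : ℂ))) *
            Complex.sin ((k : ℂ) * (x : ℂ))) u' u'' ∧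
        ∃ x ∈ Set.Icc (0 : ℝ) l2,
          Complex.exp (-(Complex.I * (τ : ℂ) * (x : ℂ))) *
            Complex.sin ((k : ℂ) * (x : ℂ)) ≠ 0) :=
  non_bloch_spectrum_general l1 l2 l3 hl2 hsum τ hτ0 hτ k hk hs
end
end
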